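/- For the Berwald–Moór metric of momenta the T-tensor vanishes identically: T^{hijk} := K·C^{hij}|^k + a^h C^{ijk} + a^i C^{jkh} + a^j C^{khi} + a^k C^{hij} = 0 for all indices h, i, j, k, where C^{hij}|^k = ∂C^{hij}/∂p_k + ∑_r (C^{rij}C_r^{hk} + C^{hrj}C_r^{ik} + C^{hir}C_r^{jk}). -/

import Mathlib

open Finset

noncomputable section

/-- The Berwald–Moór coefficients: `a^{i₁…i_n} = 1/n!` if the indices are pairwise
distinct and `0` otherwise, with `n = N + 4`. -/
def BMc (N : ℕ) : (Fin (N + 4) → Fin (N + 4)) → ℝ :=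
  fun ι => if Function.Injective ι then ((N + 4).factorial : ℝ)⁻¹ else 0

/-- `A(p) = ∑ a^{i₁…i_n} p_{i₁}⋯p_{i_n}`. -/
def Afun (N : ℕ) (p : Fin (N + 4) → ℝ) : ℝ :=
  ∑ ι : Fin (N + 4) → Fin (N + 4), BMc N ι * ∏ t, p (ι t)

/-- `K(p) = A(p)^{1/n}`, the Berwald–Moór metric of momenta. -/
def Kfun (N : ℕ) (p : Fin (N + 4) → ℝ) : ℝ :=
  Afun N p ^ ((1 : ℝ) / (N + 4))

/-- `a^i = (∑ a^{i i₂…i_n} p_{i₂}⋯p_{i_n}) / K^{n-1}`. -/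
def aU1 (N : ℕ) (i : Fin (N + 4)) (p : Fin (N + 4) → ℝ) : ℝ :=
  (∑ ι : Fin (N + 3) → Fin (N + 4), BMc N (Fin.cons i ι) * ∏ t, p (ι t)) / Kfun N p ^ (N + 3)

/-- `a^{ij} = (∑ a^{i j i₃…i_n} p_{i₃}⋯p_{i_n}) / K^{n-2}`. -/
def aU2 (N : ℕ) (i j : Fin (N + 4)) (p : Fin (N + 4) → ℝ) : ℝ :=
  (∑ ι : Fin (N + 2) → Fin (N + 4), BMc N (Fin.cons i (Fin.cons j ι)) * ∏ t, p (ι t)) /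
    Kfun N p ^ (N + 2)

/-- `a^{ijk} = (∑ a^{i j k i₄…i_n} p_{i₄}⋯p_{i_n}) / K^{n-3}`. -/
def aU3 (N : ℕ) (i j k : Fin (N + 4)) (p : Fin (N + 4) → ℝ) : ℝ :=
  (∑ ι : Fin (N + 1) → Fin (N + 4), BMc N (Fin.cons i (Fin.cons j (Fin.cons k ι))) *
    ∏ t, p (ι t)) / Kfun N p ^ (N + 1)

/-- The matrix `a_{ij}`: `a_{ij} = n a_i a_j` for `i ≠ j` and `a_{ii} = -n(n-2) a_i²`,
where `a_i = p_i/K`. -/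
def aLowBM (N : ℕ) (p : Fin (N + 4) → ℝ) (i j : Fin (N + 4)) : ℝ :=
  if i = j then -((N + 4 : ℝ) * (N + 2)) * (p i / Kfun N p) ^ 2
  else (N + 4 : ℝ) * (p i / Kfun N p) * (p j / Kfun N p)

/-- `g_{ij} = (1/(n-1)) a_{ij} + ((n-2)/(n-1)) a_i a_j`. -/
def gLowBM (N : ℕ) (p : Fin (N + 4) → ℝ) (i j : Fin (N + 4)) : ℝ :=
  (1 / (N + 3 : ℝ)) * aLowBM N p i j +
    ((N + 2 : ℝ) / (N + 3)) * (p i / Kfun N p) * (p j / Kfun N p)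

/-- Partial derivative `∂f/∂p_k` of a function of `p`. -/
def pd {n : ℕ} (f : (Fin n → ℝ) → ℝ) (k : Fin n) (p : Fin n → ℝ) : ℝ :=
  deriv (fun t => f (Function.update p k t)) (p k)

/-- Fundamental metrical d-tensor `g^{ij} = (1/2) ∂²(K²)/∂p_i∂p_j`. -/
def gU (N : ℕ) (i j : Fin (N + 4)) (p : Fin (N + 4) → ℝ) : ℝ :=
  (1 / 2 : ℝ) * pd (fun q => pd (fun r => Kfun N r ^ 2) j q) i p

/-- Angular metrical d-tensor `h^{ij} = K ∂²K/∂p_i∂p_j`. -/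
def hU (N : ℕ) (i j : Fin (N + 4)) (p : Fin (N + 4) → ℝ) : ℝ :=
  Kfun N p * pd (fun q => pd (Kfun N) j q) i p

/-- v-torsion d-tensor `C^{ijk} = -(1/2) ∂g^{ij}/∂p_k`. -/
def CU (N : ℕ) (i j k : Fin (N + 4)) (p : Fin (N + 4) → ℝ) : ℝ :=
  -(1 / 2 : ℝ) * pd (gU N i j) k p

/-- v-derivation components `C_i^{jk} = ∑_s g_{is} C^{sjk}`. -/
def CL (N : ℕ) (p : Fin (N + 4) → ℝ) (i j k : Fin (N + 4)) : ℝ :=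
  ∑ s, gLowBM N p i s * CU N s j k p

/-!
On the positive orthant `K = (p₁⋯pₙ)^{1/n}`, so `K²` and all its partial derivatives are monomials
`c · (∏ p)^{2/n} / (p_{i₁}⋯p_{i_m})`, and `∂/∂p_k` only multiplies the coefficient `c` by
`2/n - #{t | i_t = k}` and appends `k` to the indices. This makes `g^{ij}`, `C^{ijk}`,
`∂C^{hij}/∂p_k`, `C_r^{hk}` and `a^i` explicit; in particular
`C^{ijk} = c_{ijk} K² / (n³ p_i p_j p_k)`, where
`c_{ijk} = n (δ_{ij} + δ_{jk} + δ_{ik}) - n² δ_{ij} δ_{jk} - 2` is `torsionCoeff n i j k`.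
After the common factor `K³ / (n⁴ p_h p_i p_j p_k)` is cleared, `T^{hijk} = 0` becomes an identity
between polynomials in `n` and Kronecker deltas. The sums over `r` can be evaluated because
`c_{rab}` is affine in `δ_{ra}` and `δ_{rb}`; what remains is checked on each pattern of
coincidences among `h, i, j, k`.
-/

open Function

theorem card_filter_injective_fin (m : ℕ) :
    #{κ : Fin m → Fin m | Injective κ} = m.factorial := by
  rw [← Fintype.card_subtype, Fintype.card_congr (Equiv.subtypeInjectiveEquivEmbedding _ _),
    Fintype.card_embedding_eq, Fintype.card_fin, Nat.descFactorial_self]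

theorem sum_ite_injective_prod_comp {R : Type*} [CommSemiring R] {m : ℕ} (f : Fin m → R) :
    ∑ κ : Fin m → Fin m, (if Injective κ then ∏ t, f (κ t) else 0) = m.factorial * ∏ t, f t := by
  have hperm : ∀ κ : Fin m → Fin m, Injective κ → ∏ t, f (κ t) = ∏ t, f t := fun κ hκ =>
    Equiv.prod_comp (Equiv.ofBijective κ (Finite.injective_iff_bijective.mp hκ)) f
  rw [← Finset.sum_filter, Finset.sum_congr rfl fun κ hκ => hperm κ (Finset.mem_filter.mp hκ).2,
    Finset.sum_const, card_filter_injective_fin, nsmul_eq_mul]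

theorem sum_ite_cons_injective {R : Type*} [AddCommMonoid R] {m : ℕ} (i : Fin (m + 1))
    (F : (Fin m → Fin (m + 1)) → R) :
    ∑ ι : Fin m → Fin (m + 1),
        (if Injective (Fin.cons i ι : Fin (m + 1) → Fin (m + 1)) then F ι else 0) =
      ∑ κ : Fin m → Fin m, if Injective κ then F (i.succAbove ∘ κ) else 0 := by
  symm
  refine Fintype.sum_of_injective (i.succAbove ∘ ·) Fin.succAbove_right_injective.comp_left _ _
    ?_ ?_
  · intro ι hι
    refine if_neg fun hinj => hι ?_
    have hne : ∀ t, ι t ≠ i := fun t ht => (Fin.cons_injective_iff.mp hinj).1 ⟨t, ht⟩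
    choose κ hκ using fun t => Fin.exists_succAbove_eq (hne t)
    exact ⟨κ, funext hκ⟩
  · intro κ
    simp only [Fin.cons_injective_iff, Set.mem_range, comp_apply, Fin.succAbove_ne, exists_false,
      not_false_eq_true, true_and, Fin.succAbove_right_injective.of_comp_iff]

theorem BMc_mul_eq (N : ℕ) (ι : Fin (N + 4) → Fin (N + 4)) (x : ℝ) :
    BMc N ι * x = ((N + 4).factorial : ℝ)⁻¹ * if Injective ι then x else 0 := by
  unfold BMc
  split_ifs <;> simp

theorem Afun_eq_prod (N : ℕ) (p : Fin (N + 4) → ℝ) : Afun N p = ∏ i, p i := by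
  unfold Afun
  simp only [BMc_mul_eq, ← Finset.mul_sum, sum_ite_injective_prod_comp]
  field_simp

theorem Kfun_eq_rpow (N : ℕ) (p : Fin (N + 4) → ℝ) :
    Kfun N p = (∏ i, p i) ^ ((1 : ℝ) / (N + 4)) := by
  rw [Kfun, Afun_eq_prod]

theorem aU1_numerator_eq (N : ℕ) (i : Fin (N + 4)) (p : Fin (N + 4) → ℝ) :
    ∑ ι : Fin (N + 3) → Fin (N + 4), BMc N (Fin.cons i ι) * ∏ t, p (ι t) =
      (∏ t : Fin (N + 3), p (i.succAbove t)) / (N + 4) := by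
  simp only [BMc_mul_eq, ← Finset.mul_sum, sum_ite_cons_injective, comp_apply]
  rw [sum_ite_injective_prod_comp (fun t => p (i.succAbove t)), Nat.factorial_succ (N + 3)]
  push_cast
  field_simp
  ring

theorem Multiset.prod_map_update {α M : Type*} [DecidableEq α] [CommMonoid M]
    (s : Multiset α) (f : α → M) (k : α) (t : M) :
    (s.map (update f k t)).prod = t ^ s.count k * ((s.filter (· ≠ k)).map f).prod := by
  induction s using Multiset.induction_on with
  | empty => simp
  | cons b s ih =>
    rcases eq_or_ne b k with rfl | hb
    · simp [ih, pow_succ, mul_assoc, mul_left_comm]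
    · simp [ih, hb, Multiset.count_cons_of_ne hb.symm, mul_left_comm]

section PowerMonomial

variable {n : ℕ}

def prodRpowDiv (c a : ℝ) (s : Multiset (Fin n)) (q : Fin n → ℝ) : ℝ :=
  c * (∏ i, q i) ^ a / (s.map q).prod

theorem const_mul_prodRpowDiv (b c a : ℝ) (s : Multiset (Fin n)) (q : Fin n → ℝ) :
    b * prodRpowDiv c a s q = prodRpowDiv (b * c) a s q := by
  simp only [prodRpowDiv, mul_div_assoc, mul_assoc]

theorem pd_congr_of_pos {f g : (Fin n → ℝ) → ℝ} (k : Fin n) {p : Fin n → ℝ}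
    (hp : ∀ i, 0 < p i) (hfg : ∀ q : Fin n → ℝ, (∀ i, 0 < q i) → f q = g q) :
    pd f k p = pd g k p := by
  refine Filter.EventuallyEq.deriv_eq (Filter.eventuallyEq_of_mem (Ioi_mem_nhds (hp k)) ?_)
  intro t ht
  refine hfg _ fun i => ?_
  rcases eq_or_ne i k with rfl | hi
  · simpa using ht
  · simpa [update_of_ne hi] using hp i

theorem prodRpowDiv_update (c a : ℝ) (s : Multiset (Fin n)) (p : Fin n → ℝ)
    (hp : ∀ i, 0 < p i) (k : Fin n) {t : ℝ} (ht : 0 < t) :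
    prodRpowDiv c a s (update p k t) =
      c * (∏ i ∈ univ \ {k}, p i) ^ a / ((s.filter (· ≠ k)).map p).prod *
        t ^ (a - s.count k) := by
  have hrest : 0 ≤ ∏ i ∈ univ \ {k}, p i := (Finset.prod_pos fun i _ => hp i).le
  rw [prodRpowDiv, Finset.prod_update_of_mem (mem_univ k), Multiset.prod_map_update,
    Real.mul_rpow ht.le hrest, Real.rpow_sub ht, Real.rpow_natCast]
  ring

theorem pd_prodRpowDiv (c a : ℝ) (s : Multiset (Fin n)) (k : Fin n) {p : Fin n → ℝ}
    (hp : ∀ i, 0 < p i) :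
    pd (prodRpowDiv c a s) k p = prodRpowDiv (c * (a - s.count k)) a (k ::ₘ s) p := by
  set C := c * (∏ i ∈ univ \ {k}, p i) ^ a / ((s.filter (· ≠ k)).map p).prod
  have hline : (fun t => prodRpowDiv c a s (update p k t)) =ᶠ[nhds (p k)]
      fun t => C * t ^ (a - s.count k) :=
    Filter.eventuallyEq_of_mem (Ioi_mem_nhds (hp k)) fun t ht => prodRpowDiv_update c a s p hp k ht
  have hp_eq : prodRpowDiv c a s p = C * p k ^ (a - s.count k) := by
    simpa using prodRpowDiv_update c a s p hp k (hp k)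
  have hderiv := (Real.hasDerivAt_rpow_const (p := a - s.count k) (Or.inl (hp k).ne')).const_mul C
  rw [pd, hline.deriv_eq, hderiv.deriv, Real.rpow_sub_one (hp k).ne']
  have hcons : prodRpowDiv (c * (a - s.count k)) a (k ::ₘ s) p =
      (a - s.count k) * prodRpowDiv c a s p / p k := by
    simp only [prodRpowDiv, Multiset.map_cons, Multiset.prod_cons]
    field_simp
  rw [hcons, hp_eq]
  ring

end PowerMonomial

section TorsionCoefficients

variable {ι : Type*} [DecidableEq ι]

def kroneckerDelta (a b : ι) : ℝ := if a = b then 1 else 0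

def torsionCoeff (ν : ℝ) (a b c : ι) : ℝ :=
  ν * (kroneckerDelta a b + kroneckerDelta b c + kroneckerDelta a c) -
    ν ^ 2 * kroneckerDelta a b * kroneckerDelta b c - 2

theorem torsionCoeff_swap (ν : ℝ) (a b c : ι) : torsionCoeff ν a b c = torsionCoeff ν b a c := by
  unfold torsionCoeff kroneckerDelta
  split_ifs <;> grind

theorem torsionCoeff_rotate (ν : ℝ) (a b c : ι) : torsionCoeff ν a b c = torsionCoeff ν c a b := by
  unfold torsionCoeff kroneckerDelta
  split_ifs <;> grind

theorem torsionCoeff_eq_affine (ν : ℝ) (r a b : ι) :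
    torsionCoeff ν r a b = ν * (1 - ν * kroneckerDelta a b) * kroneckerDelta r a +
      ν * kroneckerDelta r b + (ν * kroneckerDelta a b - 2) := by
  unfold torsionCoeff
  ring

theorem kroneckerDelta_comm (a b : ι) : kroneckerDelta a b = kroneckerDelta b a := by
  simp only [kroneckerDelta, eq_comm]

variable [Fintype ι]

theorem sum_kroneckerDelta (a : ι) : ∑ r, kroneckerDelta r a = 1 := by
  simp [kroneckerDelta]

theorem sum_kroneckerDelta_mul (a b : ι) :
    ∑ r, kroneckerDelta r a * kroneckerDelta r b = kroneckerDelta a b := by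
  simp only [kroneckerDelta, ite_mul, one_mul, zero_mul]
  simp

theorem sum_affine_kroneckerDelta_mul (α γ β α' γ' β' : ℝ) (a b x y : ι) :
    ∑ r, (α * kroneckerDelta r a + γ * kroneckerDelta r b + β) *
        (α' * kroneckerDelta r x + γ' * kroneckerDelta r y + β') =
      α * α' * kroneckerDelta a x + α * γ' * kroneckerDelta a y + α * β' +
        γ * α' * kroneckerDelta b x + γ * γ' * kroneckerDelta b y + γ * β' + β * α' + β * γ' +
        Fintype.card ι * (β * β') := by
  have hexpand : ∀ r, (α * kroneckerDelta r a + γ * kroneckerDelta r b + β) *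
      (α' * kroneckerDelta r x + γ' * kroneckerDelta r y + β') =
      α * α' * (kroneckerDelta r a * kroneckerDelta r x) +
        α * γ' * (kroneckerDelta r a * kroneckerDelta r y) + α * β' * kroneckerDelta r a +
        γ * α' * (kroneckerDelta r b * kroneckerDelta r x) +
        γ * γ' * (kroneckerDelta r b * kroneckerDelta r y) +
        γ * β' * kroneckerDelta r b + β * α' * kroneckerDelta r x + β * γ' * kroneckerDelta r y +
        β * β' := fun r => by ring
  simp only [hexpand, Finset.sum_add_distrib, ← Finset.mul_sum, sum_kroneckerDelta_mul,
    sum_kroneckerDelta, Finset.sum_const, Finset.card_univ, nsmul_eq_mul]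
  ring

theorem sum_torsionCoeff (a b : ι) : ∑ r, torsionCoeff (Fintype.card ι) r a b = 0 := by
  simp only [torsionCoeff_eq_affine, Finset.sum_add_distrib, ← Finset.mul_sum, sum_kroneckerDelta,
    Finset.sum_const, Finset.card_univ, nsmul_eq_mul]
  ring

theorem torsionCoeff_contraction (h i j k : ι) :
    ∑ r, (torsionCoeff (Fintype.card ι) r i j * torsionCoeff (Fintype.card ι) r h k +
        torsionCoeff (Fintype.card ι) r h j * torsionCoeff (Fintype.card ι) r i k +
        torsionCoeff (Fintype.card ι) r h i * torsionCoeff (Fintype.card ι) r j k) =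
      Fintype.card ι * (2 - Fintype.card ι * (kroneckerDelta k h + kroneckerDelta k i +
          kroneckerDelta k j)) * torsionCoeff (Fintype.card ι) h i j +
        Fintype.card ι * (torsionCoeff (Fintype.card ι) i j k +
          torsionCoeff (Fintype.card ι) h j k + torsionCoeff (Fintype.card ι) h i k +
          torsionCoeff (Fintype.card ι) h i j) := by
  -- `split_ifs` is very slow when both `a = b` and `b = a` occur, so orient the deltas first.
  simp only [Finset.sum_add_distrib, torsionCoeff_eq_affine, sum_affine_kroneckerDelta_mul,
    kroneckerDelta_comm i h, kroneckerDelta_comm j h, kroneckerDelta_comm k h,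
    kroneckerDelta_comm j i, kroneckerDelta_comm k i, kroneckerDelta_comm k j]
  unfold kroneckerDelta
  generalize (Fintype.card ι : ℝ) = ν
  split_ifs <;> subst_vars <;> first | contradiction | ring1

end TorsionCoefficients

section BerwaldMoor

variable {N : ℕ} {q : Fin (N + 4) → ℝ}

theorem Kfun_pos (hq : ∀ i, 0 < q i) : 0 < Kfun N q := by
  rw [Kfun_eq_rpow]
  exact Real.rpow_pos_of_pos (Finset.prod_pos fun i _ => hq i) _

theorem prodRpowDiv_eq_Kfun_sq (hq : ∀ i, 0 < q i) (c : ℝ) (s : Multiset (Fin (N + 4))) :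
    prodRpowDiv c (2 / (N + 4)) s q = c * Kfun N q ^ 2 / (s.map q).prod := by
  rw [prodRpowDiv, Kfun_eq_rpow, ← Real.rpow_natCast,
    ← Real.rpow_mul (Finset.prod_pos fun i _ => hq i).le]
  ring_nf

theorem pd_Kfun_sq (j : Fin (N + 4)) (hq : ∀ i, 0 < q i) :
    pd (fun r => Kfun N r ^ 2) j q = prodRpowDiv (2 / (N + 4)) (2 / (N + 4)) {j} q := by
  rw [pd_congr_of_pos j hq fun r hr => by simpa using (prodRpowDiv_eq_Kfun_sq hr 1 0).symm,
    pd_prodRpowDiv _ _ _ _ hq]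
  simp

theorem gU_eq (i j : Fin (N + 4)) (hq : ∀ i, 0 < q i) :
    gU N i j q =
      prodRpowDiv ((2 / (N + 4) - kroneckerDelta i j) / (N + 4)) (2 / (N + 4)) {i, j} q := by
  rw [gU, pd_congr_of_pos i hq fun r hr => pd_Kfun_sq j hr, pd_prodRpowDiv _ _ _ _ hq,
    const_mul_prodRpowDiv]
  congr 1
  simp only [Multiset.count_singleton, kroneckerDelta]
  split_ifs <;> simp <;> ring

theorem CU_eq_prodRpowDiv (i j k : Fin (N + 4)) (hq : ∀ i, 0 < q i) :
    CU N i j k q =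
      prodRpowDiv (torsionCoeff (N + 4) i j k / (N + 4) ^ 3) (2 / (N + 4)) {k, i, j} q := by
  rw [CU, pd_congr_of_pos k hq fun r hr => gU_eq i j hr, pd_prodRpowDiv _ _ _ _ hq,
    const_mul_prodRpowDiv]
  congr 1
  simp only [Multiset.insert_eq_cons, Multiset.count_cons, Multiset.count_singleton,
    torsionCoeff, kroneckerDelta]
  field_simp
  split_ifs <;> subst_vars <;> first | contradiction | ring1

theorem CU_eq (i j k : Fin (N + 4)) (hq : ∀ i, 0 < q i) :
    CU N i j k q =
      torsionCoeff (N + 4) i j k * Kfun N q ^ 2 / ((N + 4) ^ 3 * (q i * q j * q k)) := by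
  rw [CU_eq_prodRpowDiv i j k hq, prodRpowDiv_eq_Kfun_sq hq]
  simp only [Multiset.insert_eq_cons, Multiset.map_cons, Multiset.map_singleton,
    Multiset.prod_cons, Multiset.prod_singleton]
  field_simp

theorem pd_CU_eq (h i j k : Fin (N + 4)) (hq : ∀ i, 0 < q i) :
    pd (CU N h i j) k q =
      (2 - (N + 4) * (kroneckerDelta k h + kroneckerDelta k i + kroneckerDelta k j)) *
        torsionCoeff (N + 4) h i j * Kfun N q ^ 2 / ((N + 4) ^ 4 * (q h * q i * q j * q k)) := by
  rw [pd_congr_of_pos k hq fun r hr => CU_eq_prodRpowDiv h i j hr, pd_prodRpowDiv _ _ _ _ hq,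
    prodRpowDiv_eq_Kfun_sq hq]
  simp only [Multiset.insert_eq_cons, Multiset.map_cons, Multiset.map_singleton,
    Multiset.prod_cons, Multiset.prod_singleton, Multiset.count_cons, Multiset.count_singleton,
    kroneckerDelta]
  push_cast
  field_simp
  ring

theorem gLowBM_eq (r s : Fin (N + 4)) (hq : ∀ i, 0 < q i) :
    gLowBM N q r s = (2 - (N + 4) * kroneckerDelta r s) * q r * q s / Kfun N q ^ 2 := by
  have hK := (Kfun_pos hq).ne'
  unfold gLowBM aLowBM kroneckerDelta
  split_ifs <;> subst_vars <;> field_simp <;> ring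

theorem CL_eq (r h k : Fin (N + 4)) (hq : ∀ i, 0 < q i) :
    CL N q r h k = -q r * torsionCoeff (N + 4) r h k / ((N + 4) ^ 2 * (q h * q k)) := by
  have hsum : ∑ s, torsionCoeff (N + 4) s h k = 0 := by
    simpa using sum_torsionCoeff (ι := Fin (N + 4)) h k
  have hterm : ∀ s, gLowBM N q r s * CU N s h k q =
      q r / ((N + 4) ^ 3 * (q h * q k)) *
        (2 * torsionCoeff (N + 4) s h k -
          (N + 4) * (kroneckerDelta r s * torsionCoeff (N + 4) s h k)) := by
    intro s
    have hK := (Kfun_pos hq).ne'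
    have hs := (hq s).ne'
    rw [gLowBM_eq r s hq, CU_eq s h k hq]
    field_simp
  simp only [CL, hterm, ← Finset.mul_sum, Finset.sum_sub_distrib, hsum, kroneckerDelta, ite_mul,
    one_mul, zero_mul, Finset.sum_ite_eq, Finset.mem_univ, if_true]
  field_simp
  ring

theorem aU1_eq (i : Fin (N + 4)) (hq : ∀ i, 0 < q i) : aU1 N i q = Kfun N q / ((N + 4) * q i) := by
  have hP : 0 < ∏ s, q s := Finset.prod_pos fun s _ => hq s
  have hK : Kfun N q * Kfun N q ^ (N + 3) = ∏ s, q s := by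
    have hexp : (1 : ℝ) / (N + 4) * ((N + 3 + 1 : ℕ) : ℝ) = 1 := by
      push_cast
      field_simp
      ring
    rw [← pow_succ', Kfun_eq_rpow, ← Real.rpow_natCast, ← Real.rpow_mul hP.le, hexp,
      Real.rpow_one]
  have hrest : ∏ t : Fin (N + 3), q (i.succAbove t) = (∏ s, q s) / q i := by
    rw [Fin.prod_univ_succAbove q i]
    field_simp [(hq i).ne']
  rw [aU1, aU1_numerator_eq, hrest, ← hK]
  field_simp [(Kfun_pos hq).ne', (hq i).ne']

end BerwaldMoor

/-- for the Berwald–Moór metric of momenta (`n = N + 4`) the T-tensor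
`T^{hijk} = K C^{hij}|^k + a^h C^{ijk} + a^i C^{jkh} + a^j C^{khi} + a^k C^{hij}`
vanishes identically. -/
theorem stmt_19 (N : ℕ) (p : Fin (N + 4) → ℝ) (hp : ∀ i, 0 < p i) :
    ∀ h i j k,
      Kfun N p * (pd (CU N h i j) k p +
          ∑ r, (CU N r i j p * CL N p r h k + CU N h r j p * CL N p r i k +
            CU N h i r p * CL N p r j k)) +
        aU1 N h p * CU N i j k p + aU1 N i p * CU N j k h p +
        aU1 N j p * CU N k h i p + aU1 N k p * CU N h i j p = 0 := by
  intro h i j k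
  have hcontraction := torsionCoeff_contraction (ι := Fin (N + 4)) h i j k
  simp only [Fintype.card_fin, Nat.cast_add, Nat.cast_ofNat] at hcontraction
  have hsum : ∑ r, (CU N r i j p * CL N p r h k + CU N h r j p * CL N p r i k +
      CU N h i r p * CL N p r j k) =
      -(Kfun N p ^ 2 / ((N + 4) ^ 5 * (p h * p i * p j * p k))) *
        ∑ r, (torsionCoeff (N + 4) r i j * torsionCoeff (N + 4) r h k +
          torsionCoeff (N + 4) r h j * torsionCoeff (N + 4) r i k +
          torsionCoeff (N + 4) r h i * torsionCoeff (N + 4) r j k) := by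
    rw [Finset.mul_sum]
    refine Finset.sum_congr rfl fun r _ => ?_
    rw [CU_eq r i j hp, CU_eq h r j hp, CU_eq h i r hp, CL_eq r h k hp, CL_eq r i k hp,
      CL_eq r j k hp, torsionCoeff_swap _ h r j, torsionCoeff_rotate _ h i r]
    field_simp [(hp r).ne']
    ring
  rw [hsum, hcontraction, pd_CU_eq h i j k hp, aU1_eq h hp, aU1_eq i hp, aU1_eq j hp, aU1_eq k hp,
    CU_eq i j k hp, CU_eq j k h hp, CU_eq k h i hp, CU_eq h i j hp, torsionCoeff_rotate _ j k h,
    torsionCoeff_rotate _ k h i, torsionCoeff_rotate _ i k h]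
  field_simp [(Kfun_pos hp).ne', (hp h).ne', (hp i).ne', (hp j).ne', (hp k).ne']
  ring
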